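/- Let (X = Fin 2, Y, 𝒜, ℬ, W) be a bipartite game where Alice has exactly two inputs, and suppose it admits a winning quantum strategy in the commuting-operator model given by H, ψ ≠ 0, projections (P^x_a) and (Q^y_b). Then there exist outputs a₀, a₁ ∈ 𝒜 such that for every y ∈ Y there exists b^(y) ∈ ℬ with ⟪ψ, P^0_{a₀} (Q^y_{b^(y)} ψ)⟫ ≠ 0 and ⟪ψ, P^1_{a₁} (Q^y_{b^(y)} ψ)⟫ ≠ 0; consequently (0, y, a₀, b^(y)) ∈ W and (1, y, a₁, b^(y)) ∈ W for every y ∈ Y. -/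

import Mathlib

/-!
Expand `⟪ψ, ψ⟫ ≠ 0` along the partitions of unity `∑ a, P 1 a = 1` and `∑ a, P 0 a = 1` to find
`a₁, a₀` with `⟪P 1 a₁ ψ, P 0 a₀ ψ⟫ ≠ 0`, and then, for each `y`, along `∑ b, Q y b = 1` to find `b`
with `⟪P 1 a₁ ψ, Q y b (P 0 a₀ ψ)⟫ ≠ 0`. Since `Q y b` is an orthogonal projection commuting with
Alice's projections, this inner product equals `⟪P 1 a₁ (Q y b ψ), P 0 a₀ (Q y b ψ)⟫`, so both
`P x aₓ (Q y b ψ)` are nonzero. Finally `P x aₓ ∘ Q y b` is itself an orthogonal projection, so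
`⟪ψ, P x aₓ (Q y b ψ)⟫ = ‖P x aₓ (Q y b ψ)‖²` is nonzero.
-/

open scoped InnerProductSpace

namespace LinearMap

variable {𝕜 E : Type*} [RCLike 𝕜] [NormedAddCommGroup E] [InnerProductSpace 𝕜 E]

theorem IsSymmetricProjection.inner_apply_right {p : E →ₗ[𝕜] E}
    (hp : p.IsSymmetricProjection) (u v : E) : ⟪u, p v⟫_𝕜 = ⟪p u, p v⟫_𝕜 := by
  rw [hp.isSymmetric, ← Module.End.mul_apply, hp.isIdempotentElem.eq]

theorem IsSymmetricProjection.inner_apply_self_ne_zero_iff {p : E →ₗ[𝕜] E}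
    (hp : p.IsSymmetricProjection) (u : E) : ⟪u, p u⟫_𝕜 ≠ 0 ↔ p u ≠ 0 := by
  rw [hp.inner_apply_right, inner_self_ne_zero]

theorem IsSymmetricProjection.mul_of_commute {p q : E →ₗ[𝕜] E}
    (hp : p.IsSymmetricProjection) (hq : q.IsSymmetricProjection) (hpq : Commute p q) :
    (p * q).IsSymmetricProjection :=
  ⟨hp.isIdempotentElem.mul_of_commute hpq hq.isIdempotentElem,
    hp.isSymmetric.mul_of_commute hq.isSymmetric hpq⟩

theorem IsSymmetricProjection.inner_apply_apply_self_ne_zero_iff {p q : E →ₗ[𝕜] E}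
    (hp : p.IsSymmetricProjection) (hq : q.IsSymmetricProjection) (hpq : Commute p q) (u : E) :
    ⟪u, p (q u)⟫_𝕜 ≠ 0 ↔ p (q u) ≠ 0 :=
  (hp.mul_of_commute hq hpq).inner_apply_self_ne_zero_iff u

theorem exists_inner_apply_ne_zero_of_sum_eq_id {ι : Type*} [Fintype ι] {p : ι → E →ₗ[𝕜] E}
    (hp : ∑ i, p i = LinearMap.id) {u v : E} (huv : ⟪u, v⟫_𝕜 ≠ 0) : ∃ i, ⟪u, p i v⟫_𝕜 ≠ 0 := by
  have hsum : ∑ i, ⟪u, p i v⟫_𝕜 = ⟪u, v⟫_𝕜 := by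
    rw [← inner_sum, ← LinearMap.sum_apply, hp, LinearMap.id_apply]
  obtain ⟨i, -, hi⟩ := Finset.exists_ne_zero_of_sum_ne_zero (hsum ▸ huv)
  exact ⟨i, hi⟩

end LinearMap

open LinearMap

theorem quantum_strategy_yields_deterministic_strategy_general
    {Y 𝒜 ℬ : Type*} [Fintype 𝒜] [Fintype ℬ]
    (W : Set (Fin 2 × Y × 𝒜 × ℬ))
    {H : Type*} [NormedAddCommGroup H] [InnerProductSpace ℂ H]
    (ψ : H) (hψ : ψ ≠ 0)
    (P : Fin 2 → 𝒜 → H →ₗ[ℂ] H) (Q : Y → ℬ → H →ₗ[ℂ] H)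
    (hPidem : ∀ x a, P x a ∘ₗ P x a = P x a)
    (hPsa : ∀ x a (u v : H), ⟪P x a u, v⟫_ℂ = ⟪u, P x a v⟫_ℂ)
    (hPsum : ∀ x, ∑ a, P x a = LinearMap.id)
    (hQidem : ∀ y b, Q y b ∘ₗ Q y b = Q y b)
    (hQsa : ∀ y b (u v : H), ⟪Q y b u, v⟫_ℂ = ⟪u, Q y b v⟫_ℂ)
    (hQsum : ∀ y, ∑ b, Q y b = LinearMap.id)
    (hcomm : ∀ x y a b, P x a ∘ₗ Q y b = Q y b ∘ₗ P x a)
    (hwin : ∀ x y a b, ⟪ψ, P x a (Q y b ψ)⟫_ℂ ≠ 0 → (x, y, a, b) ∈ W) :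
    ∃ a₀ a₁ : 𝒜, ∀ y : Y, ∃ b : ℬ,
      ⟪ψ, P 0 a₀ (Q y b ψ)⟫_ℂ ≠ 0 ∧ ⟪ψ, P 1 a₁ (Q y b ψ)⟫_ℂ ≠ 0 ∧
      (0, y, a₀, b) ∈ W ∧ (1, y, a₁, b) ∈ W := by
  have hP x a : (P x a).IsSymmetricProjection := ⟨hPidem x a, hPsa x a⟩
  have hQ y b : (Q y b).IsSymmetricProjection := ⟨hQidem y b, hQsa y b⟩
  have hQP x y a b (u : H) : Q y b (P x a u) = P x a (Q y b u) :=
    (LinearMap.congr_fun (hcomm x y a b) u).symm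
  obtain ⟨a₁, h₁⟩ := exists_inner_apply_ne_zero_of_sum_eq_id (hPsum 1) (inner_self_ne_zero.2 hψ)
  rw [← hPsa] at h₁
  obtain ⟨a₀, h₁₀⟩ := exists_inner_apply_ne_zero_of_sum_eq_id (hPsum 0) h₁
  refine ⟨a₀, a₁, fun y => ?_⟩
  obtain ⟨b, hb⟩ := exists_inner_apply_ne_zero_of_sum_eq_id (hQsum y) h₁₀
  rw [(hQ y b).inner_apply_right, hQP, hQP] at hb
  have h₀ : ⟪ψ, P 0 a₀ (Q y b ψ)⟫_ℂ ≠ 0 :=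
    ((hP 0 a₀).inner_apply_apply_self_ne_zero_iff (hQ y b) (hcomm 0 y a₀ b) ψ).2
      fun h => hb (by rw [h, inner_zero_right])
  have h₁ : ⟪ψ, P 1 a₁ (Q y b ψ)⟫_ℂ ≠ 0 :=
    ((hP 1 a₁).inner_apply_apply_self_ne_zero_iff (hQ y b) (hcomm 1 y a₁ b) ψ).2
      fun h => hb (by rw [h, inner_zero_left])
  exact ⟨b, h₀, h₁, hwin 0 y a₀ b h₀, hwin 1 y a₁ b h₁⟩

/-- For a winning commuting-operator quantum strategy of a game in which Alice has
exactly two inputs, there are outputs `a₀, a₁` for Alice such that for each of Bob's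
inputs `y` there is an output `b` which occurs with nonzero amplitude together with
both `a₀` (on input `0`) and `a₁` (on input `1`); consequently both
`(0, y, a₀, b)` and `(1, y, a₁, b)` belong to the winning relation `W`. -/
theorem quantum_strategy_yields_deterministic_strategy
    {Y 𝒜 ℬ : Type*} [Fintype 𝒜] [Nonempty 𝒜] [Fintype ℬ] [Nonempty ℬ]
    (W : Set (Fin 2 × Y × 𝒜 × ℬ))
    {H : Type*} [NormedAddCommGroup H] [InnerProductSpace ℂ H] [CompleteSpace H]
    (ψ : H) (hψ : ψ ≠ 0)
    (P : Fin 2 → 𝒜 → H →ₗ[ℂ] H) (Q : Y → ℬ → H →ₗ[ℂ] H)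
    (hPidem : ∀ x a, P x a ∘ₗ P x a = P x a)
    (hPsa : ∀ x a (u v : H), ⟪P x a u, v⟫_ℂ = ⟪u, P x a v⟫_ℂ)
    (hPsum : ∀ x, ∑ a, P x a = LinearMap.id)
    (hQidem : ∀ y b, Q y b ∘ₗ Q y b = Q y b)
    (hQsa : ∀ y b (u v : H), ⟪Q y b u, v⟫_ℂ = ⟪u, Q y b v⟫_ℂ)
    (hQsum : ∀ y, ∑ b, Q y b = LinearMap.id)
    (hcomm : ∀ x y a b, P x a ∘ₗ Q y b = Q y b ∘ₗ P x a)
    (hwin : ∀ x y a b, ⟪ψ, P x a (Q y b ψ)⟫_ℂ ≠ 0 → (x, y, a, b) ∈ W) :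
    ∃ a₀ a₁ : 𝒜, ∀ y : Y, ∃ b : ℬ,
      ⟪ψ, P 0 a₀ (Q y b ψ)⟫_ℂ ≠ 0 ∧ ⟪ψ, P 1 a₁ (Q y b ψ)⟫_ℂ ≠ 0 ∧
      (0, y, a₀, b) ∈ W ∧ (1, y, a₁, b) ∈ W :=
  quantum_strategy_yields_deterministic_strategy_general W ψ hψ P Q hPidem hPsa hPsum hQidem hQsa
    hQsum hcomm hwin
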